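/- arXiv:math/0506258 — 2 statements merged into one kernel-verified Lean document; each statement's English description precedes it below -/
import Mathlib

section
/- With M, M₁, M₂, M₀, M̄ and the collapse map f : M̄ → M as in the context: if the splitting admits a bicollar, then the collapse map f : M̄ → M is a homotopy equivalence of topological spaces. -/
set_option linter.unusedSectionVars false

open Set

variable {M : Type*} [TopologicalSpace M]

/-- The point `-1` of the interval `[-1,1]`. -/
def negOne : ↥(Set.Icc (-1:ℝ) 1) := ⟨-1, le_rfl, by norm_num⟩

/-- The point `1` of the interval `[-1,1]`. -/
def posOne : ↥(Set.Icc (-1:ℝ) 1) := ⟨1, by norm_num, le_rfl⟩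

/-- The disjoint sum `(M₁ ⊕ (M₀ × [-1,1])) ⊕ M₂`, where `M₀ = M₁ ∩ M₂`. -/
abbrev Pre (M₁ M₂ : Set M) : Type _ :=
  (↥M₁ ⊕ (↥(M₁ ∩ M₂) × ↥(Set.Icc (-1:ℝ) 1))) ⊕ ↥M₂

/-- The gluing relation: for `x ∈ M₀ = M₁ ∩ M₂`, the point `x` of the summand `M₁` is
identified with `(x, -1)`, and the point `x` of the summand `M₂` is identified with
`(x, 1)`. -/
def glueRel (M₁ M₂ : Set M) : Pre M₁ M₂ → Pre M₁ M₂ → Prop := fun a b =>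
  (∃ x : ↥(M₁ ∩ M₂), a = Sum.inl (Sum.inl ⟨x.1, x.2.1⟩) ∧
      b = Sum.inl (Sum.inr (x, negOne))) ∨
  (∃ x : ↥(M₁ ∩ M₂), a = Sum.inr ⟨x.1, x.2.2⟩ ∧
      b = Sum.inl (Sum.inr (x, posOne)))

/-- The stretched space `M̄ = M₁ ∪_{M₀×{-1}} (M₀ × [-1,1]) ∪_{M₀×{1}} M₂`, as the quotient
of the disjoint sum by (the smallest equivalence relation generated by) the gluing
relation. -/
abbrev Mbar (M₁ M₂ : Set M) : Type _ := Quot (glueRel M₁ M₂)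

/-- The collapse map before passing to the quotient: inclusions on the manifold summands,
and `(x, t) ↦ x` on the cylinder summand. -/
def collapsePre (M₁ M₂ : Set M) : Pre M₁ M₂ → M :=
  Sum.elim (Sum.elim (fun a => (a : M)) (fun p => (p.1 : M))) (fun a => (a : M))

theorem collapsePre_rel (M₁ M₂ : Set M) :
    ∀ a b, glueRel M₁ M₂ a b → collapsePre M₁ M₂ a = collapsePre M₁ M₂ b := by
  rintro a b (⟨x, rfl, rfl⟩ | ⟨x, rfl, rfl⟩) <;> rfl

/-- The collapse map `f : M̄ → M`. -/
def collapse (M₁ M₂ : Set M) : Mbar M₁ M₂ → M :=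
  Quot.lift (collapsePre M₁ M₂) (collapsePre_rel M₁ M₂)

section CollapseAux

variable {M : Type*} [TopologicalSpace M] (M₁ M₂ : Set M)
  (c : ↥(M₁ ∩ M₂) × ↥(Set.Icc (-1:ℝ) 1) → M)

/-- Clamp a real number into `[-1,1]`. -/
noncomputable def pr : ℝ → ↥(Set.Icc (-1:ℝ) 1) := Set.projIcc (-1) 1 (by norm_num)

lemma pr_coe (t : ↥(Set.Icc (-1:ℝ) 1)) : pr (t : ℝ) = t := Set.projIcc_val _ t

lemma pr_val_of_mem {r : ℝ} (h : r ∈ Set.Icc (-1:ℝ) 1) : ((pr r : ↥(Set.Icc (-1:ℝ) 1)) : ℝ) = r := by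
  rw [pr, Set.projIcc_of_mem _ h]

lemma continuous_pr : Continuous pr := continuous_projIcc

/-- The point `0` of `[-1,1]`. -/
def zeroI : ↥(Set.Icc (-1:ℝ) 1) := ⟨0, by norm_num⟩

/-- The time-`s` map on the collar inside `M₁`. -/
noncomputable def fOne (p : ↥(M₁ ∩ M₂) × ↥(Set.Icc (-1:ℝ) 1)) (s : ℝ) : M :=
  c (p.1, pr ((p.2 : ℝ) * (1 - s/2) - s/2))

/-- The time-`s` map on the collar inside `M₂`. -/
noncomputable def fTwo (p : ↥(M₁ ∩ M₂) × ↥(Set.Icc (-1:ℝ) 1)) (s : ℝ) : M :=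
  c (p.1, pr ((p.2 : ℝ) * (1 - s/2) + s/2))

/-- The time-`s` map on the cylinder summand. -/
noncomputable def fCyl (p : ↥(M₁ ∩ M₂) × ↥(Set.Icc (-1:ℝ) 1)) (s : ℝ) : M :=
  c (p.1, pr (s * (p.2 : ℝ) / 2))

noncomputable def bOne : M × ℝ → M :=
  fun q => Function.extend c (fun p => fOne M₁ M₂ c p q.2) id q.1

noncomputable def bTwo : M × ℝ → M :=
  fun q => Function.extend c (fun p => fTwo M₁ M₂ c p q.2) id q.1

open Classical in
noncomputable def HOne : ↥M₁ × ℝ → M :=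
  fun q => if (q.1 : M) ∈ Set.range c then bOne M₁ M₂ c ((q.1 : M), q.2) else (q.1 : M)

open Classical in
noncomputable def HTwo : ↥M₂ × ℝ → M :=
  fun q => if (q.1 : M) ∈ Set.range c then bTwo M₁ M₂ c ((q.1 : M), q.2) else (q.1 : M)

noncomputable def Htot : Pre M₁ M₂ × ℝ → M := fun q =>
  Sum.elim (Sum.elim (fun a => HOne M₁ M₂ c (a, q.2)) (fun p => fCyl M₁ M₂ c p q.2))
    (fun a => HTwo M₁ M₂ c (a, q.2)) q.1

variable {M₁ M₂ c}

lemma bOne_apply (hinj : Function.Injective c)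
    (p : ↥(M₁ ∩ M₂) × ↥(Set.Icc (-1:ℝ) 1)) (s : ℝ) :
    bOne M₁ M₂ c (c p, s) = fOne M₁ M₂ c p s := by
  simp [bOne, hinj.extend_apply]

lemma bTwo_apply (hinj : Function.Injective c)
    (p : ↥(M₁ ∩ M₂) × ↥(Set.Icc (-1:ℝ) 1)) (s : ℝ) :
    bTwo M₁ M₂ c (c p, s) = fTwo M₁ M₂ c p s := by
  simp [bTwo, hinj.extend_apply]

lemma HOne_apply (hinj : Function.Injective c) (a : ↥M₁)
    {p : ↥(M₁ ∩ M₂) × ↥(Set.Icc (-1:ℝ) 1)} (hp : (a : M) = c p) (s : ℝ) :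
    HOne M₁ M₂ c (a, s) = fOne M₁ M₂ c p s := by
  simp only [HOne]
  rw [if_pos (show (a : M) ∈ Set.range c from ⟨p, hp.symm⟩), hp, bOne_apply hinj]

lemma HTwo_apply (hinj : Function.Injective c) (a : ↥M₂)
    {p : ↥(M₁ ∩ M₂) × ↥(Set.Icc (-1:ℝ) 1)} (hp : (a : M) = c p) (s : ℝ) :
    HTwo M₁ M₂ c (a, s) = fTwo M₁ M₂ c p s := by
  simp only [HTwo]
  rw [if_pos (show (a : M) ∈ Set.range c from ⟨p, hp.symm⟩), hp, bTwo_apply hinj]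

lemma HOne_apply_notMem (a : ↥M₁) (ha : (a : M) ∉ Set.range c) (s : ℝ) :
    HOne M₁ M₂ c (a, s) = (a : M) := by
  simp only [HOne]
  rw [if_neg ha]

lemma HTwo_apply_notMem (a : ↥M₂) (ha : (a : M) ∉ Set.range c) (s : ℝ) :
    HTwo M₁ M₂ c (a, s) = (a : M) := by
  simp only [HTwo]
  rw [if_neg ha]

variable (M₁ M₂ c) in
/-- The open part of the bicollar. -/
def Ubic : Set M := c '' {p : ↥(M₁ ∩ M₂) × ↥(Set.Icc (-1:ℝ) 1) |
    -1 < (p.2 : ℝ) ∧ (p.2 : ℝ) < 1}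

variable (M₁ M₂ c) in
lemma Ubic_subset_range : Ubic M₁ M₂ c ⊆ Set.range c := Set.image_subset_range _ _

lemma mem_Ubic_iff (hinj : Function.Injective c)
    {p : ↥(M₁ ∩ M₂) × ↥(Set.Icc (-1:ℝ) 1)} :
    c p ∈ Ubic M₁ M₂ c ↔ -1 < (p.2 : ℝ) ∧ (p.2 : ℝ) < 1 := by
  constructor
  · rintro ⟨q, hq, he⟩
    rwa [hinj he] at hq
  · exact fun h => ⟨p, h, rfl⟩

lemma param_le (hinj : Function.Injective c)
    (hc0 : ∀ x : ↥(M₁ ∩ M₂), c (x, zeroI) = x)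
    (hc2 : ∀ (x : ↥(M₁ ∩ M₂)) (t : ↥(Set.Icc (-1:ℝ) 1)), 0 ≤ (t : ℝ) → c (x, t) ∈ M₂)
    {p : ↥(M₁ ∩ M₂) × ↥(Set.Icc (-1:ℝ) 1)} (hp : c p ∈ M₁) : (p.2 : ℝ) ≤ 0 := by
  by_contra h
  push_neg at h
  have h2 : c p ∈ M₂ := by
    have := hc2 p.1 p.2 h.le
    simpa using this
  have heq : ((⟨c p, hp, h2⟩ : ↥(M₁ ∩ M₂)), zeroI) = p :=
    hinj (hc0 ⟨c p, hp, h2⟩)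
  have : (p.2 : ℝ) = 0 := by
    rw [← heq]
    rfl
  linarith

lemma param_ge (hinj : Function.Injective c)
    (hc0 : ∀ x : ↥(M₁ ∩ M₂), c (x, zeroI) = x)
    (hc1 : ∀ (x : ↥(M₁ ∩ M₂)) (t : ↥(Set.Icc (-1:ℝ) 1)), (t : ℝ) ≤ 0 → c (x, t) ∈ M₁)
    {p : ↥(M₁ ∩ M₂) × ↥(Set.Icc (-1:ℝ) 1)} (hp : c p ∈ M₂) : 0 ≤ (p.2 : ℝ) := by
  by_contra h
  push_neg at h
  have h1 : c p ∈ M₁ := by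
    have := hc1 p.1 p.2 h.le
    simpa using this
  have heq : ((⟨c p, h1, hp⟩ : ↥(M₁ ∩ M₂)), zeroI) = p :=
    hinj (hc0 ⟨c p, h1, hp⟩)
  have : (p.2 : ℝ) = 0 := by
    rw [← heq]
    rfl
  linarith

variable (M₁ M₂ c) in
/-- The homeomorphism onto the image of the bicollar. -/
noncomputable def chom (hc : Topology.IsClosedEmbedding c) :
    (↥(M₁ ∩ M₂) × ↥(Set.Icc (-1:ℝ) 1)) ≃ₜ ↥(Set.range c) :=
  hc.toIsEmbedding.toHomeomorph

lemma chom_symm_spec (hc : Topology.IsClosedEmbedding c) (m : ↥(Set.range c)) :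
    c ((chom M₁ M₂ c hc).symm m) = (m : M) := by
  exact congrArg Subtype.val ((chom M₁ M₂ c hc).apply_symm_apply m)

lemma cont_fOne (hcont : Continuous c) :
    Continuous (fun q : (↥(M₁ ∩ M₂) × ↥(Set.Icc (-1:ℝ) 1)) × ℝ => fOne M₁ M₂ c q.1 q.2) := by
  apply hcont.comp
  refine Continuous.prodMk (continuous_fst.comp continuous_fst) (continuous_pr.comp ?_)
  have h2 : Continuous (fun q : (↥(M₁ ∩ M₂) × ↥(Set.Icc (-1:ℝ) 1)) × ℝ => ((q.1.2 : ℝ))) :=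
    continuous_subtype_val.comp (continuous_snd.comp continuous_fst)
  fun_prop

lemma cont_fTwo (hcont : Continuous c) :
    Continuous (fun q : (↥(M₁ ∩ M₂) × ↥(Set.Icc (-1:ℝ) 1)) × ℝ => fTwo M₁ M₂ c q.1 q.2) := by
  apply hcont.comp
  refine Continuous.prodMk (continuous_fst.comp continuous_fst) (continuous_pr.comp ?_)
  have h2 : Continuous (fun q : (↥(M₁ ∩ M₂) × ↥(Set.Icc (-1:ℝ) 1)) × ℝ => ((q.1.2 : ℝ))) :=
    continuous_subtype_val.comp (continuous_snd.comp continuous_fst)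
  fun_prop

lemma cont_fCyl (hcont : Continuous c) :
    Continuous (fun q : (↥(M₁ ∩ M₂) × ↥(Set.Icc (-1:ℝ) 1)) × ℝ => fCyl M₁ M₂ c q.1 q.2) := by
  apply hcont.comp
  refine Continuous.prodMk (continuous_fst.comp continuous_fst) (continuous_pr.comp ?_)
  have h2 : Continuous (fun q : (↥(M₁ ∩ M₂) × ↥(Set.Icc (-1:ℝ) 1)) × ℝ => ((q.1.2 : ℝ))) :=
    continuous_subtype_val.comp (continuous_snd.comp continuous_fst)
  fun_prop

lemma cont_HOne (hc : Topology.IsClosedEmbedding c)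
    (hc0 : ∀ x : ↥(M₁ ∩ M₂), c (x, zeroI) = x)
    (hc2 : ∀ (x : ↥(M₁ ∩ M₂)) (t : ↥(Set.Icc (-1:ℝ) 1)), 0 ≤ (t : ℝ) → c (x, t) ∈ M₂)
    (hopen : IsOpen (Ubic M₁ M₂ c)) :
    Continuous (HOne M₁ M₂ c) := by
  have hinj : Function.Injective c := hc.toIsEmbedding.injective
  have hKcl : IsClosed (Set.range c) := hc.isClosed_range
  have hScl : IsClosed {q : ↥M₁ × ℝ | (q.1 : M) ∈ Set.range c} :=
    hKcl.preimage (continuous_subtype_val.comp continuous_fst)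
  have hTcl : IsClosed {q : ↥M₁ × ℝ | (q.1 : M) ∉ Ubic M₁ M₂ c} := by
    have : IsOpen {q : ↥M₁ × ℝ | (q.1 : M) ∈ Ubic M₁ M₂ c} :=
      hopen.preimage (continuous_subtype_val.comp continuous_fst)
    exact this.isClosed_compl
  have hsub : closure {q : ↥M₁ × ℝ | ¬ (q.1 : M) ∈ Set.range c}
      ⊆ {q : ↥M₁ × ℝ | (q.1 : M) ∉ Ubic M₁ M₂ c} := by
    apply closure_minimal _ hTcl
    intro q hq
    exact fun hu => hq (Ubic_subset_range M₁ M₂ c hu)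
  classical
  unfold HOne
  apply continuous_if
  · -- agreement on the frontier
    intro q hq
    have hqK : (q.1 : M) ∈ Set.range c := by
      have := frontier_subset_closure hq
      rwa [hScl.closure_eq] at this
    have hqU : (q.1 : M) ∉ Ubic M₁ M₂ c := by
      apply hsub
      rw [frontier_eq_closure_inter_closure] at hq
      exact hq.2
    set p := (chom M₁ M₂ c hc).symm ⟨(q.1 : M), hqK⟩ with hp
    have hcp : c p = (q.1 : M) := chom_symm_spec hc _
    have hpM₁ : c p ∈ M₁ := by rw [hcp]; exact q.1.2
    have ht0 : (p.2 : ℝ) ≤ 0 := param_le hinj hc0 hc2 hpM₁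
    have htm1 : (p.2 : ℝ) = -1 := by
      have := (mem_Ubic_iff hinj (p := p)).not.mp (by rwa [hcp])
      push_neg at this
      have h1 : (p.2 : ℝ) < 1 → 1 ≤ (p.2 : ℝ) ∨ (p.2 : ℝ) ≤ -1 := by
        intro hlt
        rcases lt_or_ge (-1 : ℝ) (p.2 : ℝ) with h | h
        · exact absurd (this h) (not_le.mpr hlt)
        · exact Or.inr h
      rcases h1 (by linarith) with h | h
      · linarith
      · exact le_antisymm h p.2.2.1
    rw [← hcp, bOne_apply hinj]
    unfold fOne
    have harg : (p.2 : ℝ) * (1 - q.2/2) - q.2/2 = ((p.2 : ℝ)) := by rw [htm1]; ring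
    rw [harg, pr_coe]
  · -- continuity of the collar branch on the closure of the range condition
    rw [hScl.closure_eq, continuousOn_iff_continuous_restrict]
    have heq : Set.domRestrict {q : ↥M₁ × ℝ | (q.1 : M) ∈ Set.range c}
        (fun q : ↥M₁ × ℝ => bOne M₁ M₂ c ((q.1 : M), q.2))
        = fun (q : ↥{q : ↥M₁ × ℝ | (q.1 : M) ∈ Set.range c}) =>
            fOne M₁ M₂ c ((chom M₁ M₂ c hc).symm ⟨(q.val.1 : M), q.prop⟩) q.val.2 := by
      funext q
      have hcp : c ((chom M₁ M₂ c hc).symm ⟨(q.val.1 : M), q.prop⟩)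
          = (q.val.1 : M) := chom_symm_spec hc _
      simp only [Set.domRestrict_apply]
      conv_lhs => rw [← hcp]
      exact bOne_apply hinj _ _
    rw [heq]
    have hg : Continuous (fun (q : ↥{q : ↥M₁ × ℝ | (q.1 : M) ∈ Set.range c}) =>
        (((chom M₁ M₂ c hc).symm ⟨(q.val.1 : M), q.prop⟩), q.val.2)) := by
      apply Continuous.prodMk
      · apply (chom M₁ M₂ c hc).symm.continuous.comp
        apply Continuous.subtype_mk
        exact continuous_subtype_val.comp (continuous_fst.comp continuous_subtype_val)
      · exact continuous_snd.comp continuous_subtype_val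
    exact (cont_fOne hc.continuous).comp hg
  · exact (continuous_subtype_val.comp continuous_fst).continuousOn

lemma cont_HTwo (hc : Topology.IsClosedEmbedding c)
    (hc0 : ∀ x : ↥(M₁ ∩ M₂), c (x, zeroI) = x)
    (hc1 : ∀ (x : ↥(M₁ ∩ M₂)) (t : ↥(Set.Icc (-1:ℝ) 1)), (t : ℝ) ≤ 0 → c (x, t) ∈ M₁)
    (hopen : IsOpen (Ubic M₁ M₂ c)) :
    Continuous (HTwo M₁ M₂ c) := by
  have hinj : Function.Injective c := hc.toIsEmbedding.injective
  have hKcl : IsClosed (Set.range c) := hc.isClosed_range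
  have hScl : IsClosed {q : ↥M₂ × ℝ | (q.1 : M) ∈ Set.range c} :=
    hKcl.preimage (continuous_subtype_val.comp continuous_fst)
  have hTcl : IsClosed {q : ↥M₂ × ℝ | (q.1 : M) ∉ Ubic M₁ M₂ c} := by
    have : IsOpen {q : ↥M₂ × ℝ | (q.1 : M) ∈ Ubic M₁ M₂ c} :=
      hopen.preimage (continuous_subtype_val.comp continuous_fst)
    exact this.isClosed_compl
  have hsub : closure {q : ↥M₂ × ℝ | ¬ (q.1 : M) ∈ Set.range c}
      ⊆ {q : ↥M₂ × ℝ | (q.1 : M) ∉ Ubic M₁ M₂ c} := by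
    apply closure_minimal _ hTcl
    intro q hq
    exact fun hu => hq (Ubic_subset_range M₁ M₂ c hu)
  classical
  unfold HTwo
  apply continuous_if
  · intro q hq
    have hqK : (q.1 : M) ∈ Set.range c := by
      have := frontier_subset_closure hq
      rwa [hScl.closure_eq] at this
    have hqU : (q.1 : M) ∉ Ubic M₁ M₂ c := by
      apply hsub
      rw [frontier_eq_closure_inter_closure] at hq
      exact hq.2
    set p := (chom M₁ M₂ c hc).symm ⟨(q.1 : M), hqK⟩ with hp
    have hcp : c p = (q.1 : M) := chom_symm_spec hc _
    have hpM₂ : c p ∈ M₂ := by rw [hcp]; exact q.1.2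
    have ht0 : 0 ≤ (p.2 : ℝ) := param_ge hinj hc0 hc1 hpM₂
    have htm1 : (p.2 : ℝ) = 1 := by
      have := (mem_Ubic_iff hinj (p := p)).not.mp (by rwa [hcp])
      push_neg at this
      rcases lt_or_ge (-1 : ℝ) (p.2 : ℝ) with h | h
      · exact le_antisymm p.2.2.2 (this h)
      · linarith
    rw [← hcp, bTwo_apply hinj]
    unfold fTwo
    have harg : (p.2 : ℝ) * (1 - q.2/2) + q.2/2 = ((p.2 : ℝ)) := by rw [htm1]; ring
    rw [harg, pr_coe]
  · rw [hScl.closure_eq, continuousOn_iff_continuous_restrict]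
    have heq : Set.domRestrict {q : ↥M₂ × ℝ | (q.1 : M) ∈ Set.range c}
        (fun q : ↥M₂ × ℝ => bTwo M₁ M₂ c ((q.1 : M), q.2))
        = fun (q : ↥{q : ↥M₂ × ℝ | (q.1 : M) ∈ Set.range c}) =>
            fTwo M₁ M₂ c ((chom M₁ M₂ c hc).symm ⟨(q.val.1 : M), q.prop⟩) q.val.2 := by
      funext q
      have hcp : c ((chom M₁ M₂ c hc).symm ⟨(q.val.1 : M), q.prop⟩)
          = (q.val.1 : M) := chom_symm_spec hc _
      simp only [Set.domRestrict_apply]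
      conv_lhs => rw [← hcp]
      exact bTwo_apply hinj _ _
    rw [heq]
    have hg : Continuous (fun (q : ↥{q : ↥M₂ × ℝ | (q.1 : M) ∈ Set.range c}) =>
        (((chom M₁ M₂ c hc).symm ⟨(q.val.1 : M), q.prop⟩), q.val.2)) := by
      apply Continuous.prodMk
      · apply (chom M₁ M₂ c hc).symm.continuous.comp
        apply Continuous.subtype_mk
        exact continuous_subtype_val.comp (continuous_fst.comp continuous_subtype_val)
      · exact continuous_snd.comp continuous_subtype_val
    exact (cont_fTwo hc.continuous).comp hg
  · exact (continuous_subtype_val.comp continuous_fst).continuousOn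

lemma cont_Htot (hc : Topology.IsClosedEmbedding c)
    (hc0 : ∀ x : ↥(M₁ ∩ M₂), c (x, zeroI) = x)
    (hc1 : ∀ (x : ↥(M₁ ∩ M₂)) (t : ↥(Set.Icc (-1:ℝ) 1)), (t : ℝ) ≤ 0 → c (x, t) ∈ M₁)
    (hc2 : ∀ (x : ↥(M₁ ∩ M₂)) (t : ↥(Set.Icc (-1:ℝ) 1)), 0 ≤ (t : ℝ) → c (x, t) ∈ M₂)
    (hopen : IsOpen (Ubic M₁ M₂ c)) :
    Continuous (Htot M₁ M₂ c) := by
  let e₁ : Pre M₁ M₂ × ℝ ≃ₜ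
      ((↥M₁ ⊕ (↥(M₁ ∩ M₂) × ↥(Set.Icc (-1:ℝ) 1))) × ℝ) ⊕ (↥M₂ × ℝ) :=
    Homeomorph.sumProdDistrib
  let e₂ := (Homeomorph.sumCongr
    (Homeomorph.sumProdDistrib :
      (↥M₁ ⊕ (↥(M₁ ∩ M₂) × ↥(Set.Icc (-1:ℝ) 1))) × ℝ ≃ₜ
        (↥M₁ × ℝ) ⊕ ((↥(M₁ ∩ M₂) × ↥(Set.Icc (-1:ℝ) 1)) × ℝ))
    (Homeomorph.refl (↥M₂ × ℝ)))
  let e := e₁.trans e₂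
  have hkey : Htot M₁ M₂ c =
      (Sum.elim (Sum.elim (HOne M₁ M₂ c) (fun q => fCyl M₁ M₂ c q.1 q.2))
        (HTwo M₁ M₂ c)) ∘ e := by
    funext q
    obtain ⟨(a | p) | a, s⟩ := q <;> rfl
  rw [hkey]
  refine Continuous.comp ?_ e.continuous
  exact ((cont_HOne hc hc0 hc2 hopen).sumElim
    (cont_fCyl hc.continuous)).sumElim (cont_HTwo hc hc0 hc1 hopen)

lemma Htot_rel (hinj : Function.Injective c)
    (hc0 : ∀ x : ↥(M₁ ∩ M₂), c (x, zeroI) = x) (s : ℝ) :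
    ∀ a b, glueRel M₁ M₂ a b → Htot M₁ M₂ c (a, s) = Htot M₁ M₂ c (b, s) := by
  rintro a b (⟨x, rfl, rfl⟩ | ⟨x, rfl, rfl⟩)
  · show HOne M₁ M₂ c (⟨x.1, x.2.1⟩, s) = fCyl M₁ M₂ c (x, negOne) s
    have hx : ((⟨x.1, x.2.1⟩ : ↥M₁) : M) = c (x, zeroI) := (hc0 x).symm
    rw [HOne_apply hinj _ hx]
    show c (x, pr (((zeroI : ↥(Set.Icc (-1:ℝ) 1)) : ℝ) * (1 - s/2) - s/2))
        = c (x, pr (s * ((negOne : ↥(Set.Icc (-1:ℝ) 1)) : ℝ) / 2))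
    exact congrArg (fun r => c (x, pr r)) (by show (0:ℝ) * (1 - s/2) - s/2 = s * (-1) / 2; ring)
  · show HTwo M₁ M₂ c (⟨x.1, x.2.2⟩, s) = fCyl M₁ M₂ c (x, posOne) s
    have hx : ((⟨x.1, x.2.2⟩ : ↥M₂) : M) = c (x, zeroI) := (hc0 x).symm
    rw [HTwo_apply hinj _ hx]
    show c (x, pr (((zeroI : ↥(Set.Icc (-1:ℝ) 1)) : ℝ) * (1 - s/2) + s/2))
        = c (x, pr (s * ((posOne : ↥(Set.Icc (-1:ℝ) 1)) : ℝ) / 2))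
    exact congrArg (fun r => c (x, pr r)) (by show (0:ℝ) * (1 - s/2) + s/2 = s * 1 / 2; ring)

lemma Htot_zero (hc : Topology.IsClosedEmbedding c)
    (hc0 : ∀ x : ↥(M₁ ∩ M₂), c (x, zeroI) = x) (p : Pre M₁ M₂) :
    Htot M₁ M₂ c (p, 0) = collapsePre M₁ M₂ p := by
  have hinj : Function.Injective c := hc.toIsEmbedding.injective
  obtain (a | q) | a := p
  · show HOne M₁ M₂ c (a, 0) = (a : M)
    by_cases h : (a : M) ∈ Set.range c
    · have hcp : c ((chom M₁ M₂ c hc).symm ⟨(a : M), h⟩) = (a : M) := chom_symm_spec hc _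
      rw [HOne_apply hinj a hcp.symm]
      unfold fOne
      rw [show (((((chom M₁ M₂ c hc).symm ⟨(a : M), h⟩).2 : ↥(Set.Icc (-1:ℝ) 1)) : ℝ))
          * (1 - (0:ℝ)/2) - (0:ℝ)/2
          = ((((chom M₁ M₂ c hc).symm ⟨(a : M), h⟩).2 : ↥(Set.Icc (-1:ℝ) 1)) : ℝ) from by ring,
        pr_coe]
      exact hcp
    · exact HOne_apply_notMem a h 0
  · show fCyl M₁ M₂ c q 0 = (q.1 : M)
    unfold fCyl
    rw [show (0:ℝ) * ((q.2 : ℝ)) / 2 = 0 from by ring]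
    have : pr (0:ℝ) = zeroI := by
      rw [pr, Set.projIcc_of_mem _ (by norm_num)]
      rfl
    rw [this]
    exact hc0 q.1
  · show HTwo M₁ M₂ c (a, 0) = (a : M)
    by_cases h : (a : M) ∈ Set.range c
    · have hcp : c ((chom M₁ M₂ c hc).symm ⟨(a : M), h⟩) = (a : M) := chom_symm_spec hc _
      rw [HTwo_apply hinj a hcp.symm]
      unfold fTwo
      rw [show (((((chom M₁ M₂ c hc).symm ⟨(a : M), h⟩).2 : ↥(Set.Icc (-1:ℝ) 1)) : ℝ))
          * (1 - (0:ℝ)/2) + (0:ℝ)/2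
          = ((((chom M₁ M₂ c hc).symm ⟨(a : M), h⟩).2 : ↥(Set.Icc (-1:ℝ) 1)) : ℝ) from by ring,
        pr_coe]
      exact hcp
    · exact HTwo_apply_notMem a h 0

variable (M₁ M₂ c) in
/-- The stretch map at time 1. -/
noncomputable def PhiPre : Pre M₁ M₂ → M := fun p => Htot M₁ M₂ c (p, 1)

lemma PhiPre_inl_mem (hinj : Function.Injective c) (a : ↥M₁)
    {p : ↥(M₁ ∩ M₂) × ↥(Set.Icc (-1:ℝ) 1)} (hp : (a : M) = c p) :
    PhiPre M₁ M₂ c (Sum.inl (Sum.inl a)) = c (p.1, pr (((p.2 : ℝ) - 1)/2)) := by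
  show HOne M₁ M₂ c (a, 1) = _
  rw [HOne_apply hinj a hp]
  exact congrArg (fun r => c (p.1, pr r)) (by ring)

lemma PhiPre_inl_notMem (a : ↥M₁) (ha : (a : M) ∉ Set.range c) :
    PhiPre M₁ M₂ c (Sum.inl (Sum.inl a)) = (a : M) :=
  HOne_apply_notMem a ha 1

lemma PhiPre_cyl (p : ↥(M₁ ∩ M₂) × ↥(Set.Icc (-1:ℝ) 1)) :
    PhiPre M₁ M₂ c (Sum.inl (Sum.inr p)) = c (p.1, pr ((p.2 : ℝ)/2)) := by
  show fCyl M₁ M₂ c p 1 = _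
  exact congrArg (fun r => c (p.1, pr r)) (by ring)

lemma PhiPre_inr_mem (hinj : Function.Injective c) (a : ↥M₂)
    {p : ↥(M₁ ∩ M₂) × ↥(Set.Icc (-1:ℝ) 1)} (hp : (a : M) = c p) :
    PhiPre M₁ M₂ c (Sum.inr a) = c (p.1, pr (((p.2 : ℝ) + 1)/2)) := by
  show HTwo M₁ M₂ c (a, 1) = _
  rw [HTwo_apply hinj a hp]
  exact congrArg (fun r => c (p.1, pr r)) (by ring)

lemma PhiPre_inr_notMem (a : ↥M₂) (ha : (a : M) ∉ Set.range c) :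
    PhiPre M₁ M₂ c (Sum.inr a) = (a : M) :=
  HTwo_apply_notMem a ha 1

lemma phi_surj (hinj : Function.Injective c)
    (hc1 : ∀ (x : ↥(M₁ ∩ M₂)) (t : ↥(Set.Icc (-1:ℝ) 1)), (t : ℝ) ≤ 0 → c (x, t) ∈ M₁)
    (hc2 : ∀ (x : ↥(M₁ ∩ M₂)) (t : ↥(Set.Icc (-1:ℝ) 1)), 0 ≤ (t : ℝ) → c (x, t) ∈ M₂)
    (hU : M₁ ∪ M₂ = Set.univ) (m : M) : ∃ p, PhiPre M₁ M₂ c p = m := by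
  by_cases hm : m ∈ Set.range c
  · obtain ⟨p, rfl⟩ := hm
    have ht1 : (-1 : ℝ) ≤ (p.2 : ℝ) := p.2.2.1
    have ht2 : ((p.2 : ℝ)) ≤ 1 := p.2.2.2
    rcases le_or_gt ((p.2 : ℝ)) (-1/2) with h | h
    · have hmem : 2 * (p.2 : ℝ) + 1 ∈ Set.Icc (-1:ℝ) 1 := Set.mem_Icc.mpr ⟨by linarith, by linarith⟩
      have hu : ((pr (2 * (p.2 : ℝ) + 1) : ↥(Set.Icc (-1:ℝ) 1)) : ℝ) = 2 * (p.2 : ℝ) + 1 :=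
        pr_val_of_mem hmem
      refine ⟨Sum.inl (Sum.inl ⟨c (p.1, pr (2 * (p.2 : ℝ) + 1)),
        hc1 p.1 _ (by rw [hu]; linarith)⟩), ?_⟩
      rw [PhiPre_inl_mem hinj _ (rfl :
        ((⟨c (p.1, pr (2 * (p.2 : ℝ) + 1)), _⟩ : ↥M₁) : M) = c (p.1, pr (2 * (p.2 : ℝ) + 1)))]
      rw [hu, show (2 * (p.2 : ℝ) + 1 - 1)/2 = ((p.2 : ℝ)) from by ring, pr_coe]
    · rcases le_or_gt ((p.2 : ℝ)) (1/2) with h' | h'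
      · have hmem : 2 * (p.2 : ℝ) ∈ Set.Icc (-1:ℝ) 1 := Set.mem_Icc.mpr ⟨by linarith, by linarith⟩
        have hu : ((pr (2 * (p.2 : ℝ)) : ↥(Set.Icc (-1:ℝ) 1)) : ℝ) = 2 * (p.2 : ℝ) :=
          pr_val_of_mem hmem
        refine ⟨Sum.inl (Sum.inr (p.1, pr (2 * (p.2 : ℝ)))), ?_⟩
        rw [PhiPre_cyl, hu, show (2 * (p.2 : ℝ))/2 = ((p.2 : ℝ)) from by ring, pr_coe]
      · have hmem : 2 * (p.2 : ℝ) - 1 ∈ Set.Icc (-1:ℝ) 1 :=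
          Set.mem_Icc.mpr ⟨by linarith, by linarith⟩
        have hu : ((pr (2 * (p.2 : ℝ) - 1) : ↥(Set.Icc (-1:ℝ) 1)) : ℝ) = 2 * (p.2 : ℝ) - 1 :=
          pr_val_of_mem hmem
        refine ⟨Sum.inr ⟨c (p.1, pr (2 * (p.2 : ℝ) - 1)), hc2 p.1 _ (by rw [hu]; linarith)⟩, ?_⟩
        rw [PhiPre_inr_mem hinj _ (rfl :
          ((⟨c (p.1, pr (2 * (p.2 : ℝ) - 1)), _⟩ : ↥M₂) : M) = c (p.1, pr (2 * (p.2 : ℝ) - 1)))]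
        rw [hu, show (2 * (p.2 : ℝ) - 1 + 1)/2 = ((p.2 : ℝ)) from by ring, pr_coe]
  · have : m ∈ M₁ ∪ M₂ := by rw [hU]; exact Set.mem_univ m
    rcases this with h | h
    · exact ⟨Sum.inl (Sum.inl ⟨m, h⟩), PhiPre_inl_notMem ⟨m, h⟩ hm⟩
    · exact ⟨Sum.inr ⟨m, h⟩, PhiPre_inr_notMem ⟨m, h⟩ hm⟩

lemma phi_inj (hinj : Function.Injective c)
    (hc0 : ∀ x : ↥(M₁ ∩ M₂), c (x, zeroI) = x)
    (hc1 : ∀ (x : ↥(M₁ ∩ M₂)) (t : ↥(Set.Icc (-1:ℝ) 1)), (t : ℝ) ≤ 0 → c (x, t) ∈ M₁)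
    (hc2 : ∀ (x : ↥(M₁ ∩ M₂)) (t : ↥(Set.Icc (-1:ℝ) 1)), 0 ≤ (t : ℝ) → c (x, t) ∈ M₂)
    (p q : Pre M₁ M₂) (h : PhiPre M₁ M₂ c p = PhiPre M₁ M₂ c q) :
    Quot.mk (glueRel M₁ M₂) p = Quot.mk (glueRel M₁ M₂) q := by
  have hcc : ∀ (x y : ↥(M₁ ∩ M₂)) (r r' : ℝ), r ∈ Set.Icc (-1:ℝ) 1 → r' ∈ Set.Icc (-1:ℝ) 1 →
      c (x, pr r) = c (y, pr r') → x = y ∧ r = r' := by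
    intro x y r r' hr hr' hceq
    have h2 := hinj hceq
    refine ⟨congrArg Prod.fst h2, ?_⟩
    have h3 := congrArg (fun z : ↥(M₁ ∩ M₂) × ↥(Set.Icc (-1:ℝ) 1) => ((z.2 : ℝ))) h2
    simpa [pr_val_of_mem hr, pr_val_of_mem hr'] using h3
  obtain (a | pc) | a := p <;> obtain (b | qc) | b := q
  · -- M₁ vs M₁
    by_cases ha : (a : M) ∈ Set.range c <;> by_cases hb : (b : M) ∈ Set.range c
    · obtain ⟨pa, hpa⟩ := ha
      obtain ⟨pb, hpb⟩ := hb
      rw [PhiPre_inl_mem hinj a hpa.symm, PhiPre_inl_mem hinj b hpb.symm] at h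
      obtain ⟨hx, hr⟩ := hcc _ _ _ _
        (Set.mem_Icc.mpr ⟨by linarith [pa.2.2.1], by linarith [pa.2.2.2]⟩)
        (Set.mem_Icc.mpr ⟨by linarith [pb.2.2.1], by linarith [pb.2.2.2]⟩) h
      have ht : (pa.2 : ℝ) = (pb.2 : ℝ) := by linarith
      have hpq : pa = pb := Prod.ext hx (Subtype.ext ht)
      have : a = b := Subtype.ext (by rw [← hpa, ← hpb, hpq])
      rw [this]
    · obtain ⟨pa, hpa⟩ := ha
      rw [PhiPre_inl_mem hinj a hpa.symm, PhiPre_inl_notMem b hb] at h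
      exact absurd ⟨_, h⟩ hb
    · obtain ⟨pb, hpb⟩ := hb
      rw [PhiPre_inl_notMem a ha, PhiPre_inl_mem hinj b hpb.symm] at h
      exact absurd ⟨_, h.symm⟩ ha
    · rw [PhiPre_inl_notMem a ha, PhiPre_inl_notMem b hb] at h
      have hab : a = b := Subtype.ext h
      rw [hab]
  · -- M₁ vs cylinder
    by_cases ha : (a : M) ∈ Set.range c
    · obtain ⟨pa, hpa⟩ := ha
      rw [PhiPre_inl_mem hinj a hpa.symm, PhiPre_cyl] at h
      have hta : (pa.2 : ℝ) ≤ 0 := param_le hinj hc0 hc2 (by rw [hpa]; exact a.2)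
      obtain ⟨hx, hr⟩ := hcc _ _ _ _
        (Set.mem_Icc.mpr ⟨by linarith [pa.2.2.1], by linarith⟩)
        (Set.mem_Icc.mpr ⟨by linarith [qc.2.2.1], by linarith [qc.2.2.2]⟩) h
      have hta0 : (pa.2 : ℝ) = 0 := by
        have := qc.2.2.1
        linarith
      have htq : (qc.2 : ℝ) = -1 := by linarith
      apply Quot.sound
      left
      refine ⟨pa.1, ?_, ?_⟩
      · have hxx : a = ⟨(pa.1 : M), pa.1.2.1⟩ := by
          apply Subtype.ext
          show (a : M) = (pa.1 : M)
          rw [← hpa]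
          conv_lhs => rw [show pa = (pa.1, zeroI) from Prod.ext rfl (Subtype.ext hta0)]
          exact hc0 pa.1
        rw [hxx]
      · have hq2 : qc.2 = negOne := Subtype.ext htq
        rw [show qc = (pa.1, negOne) from Prod.ext hx.symm hq2]
    · rw [PhiPre_inl_notMem a ha, PhiPre_cyl] at h
      exact absurd ⟨_, h.symm⟩ ha
  · -- M₁ vs M₂
    by_cases ha : (a : M) ∈ Set.range c <;> by_cases hb : (b : M) ∈ Set.range c
    · obtain ⟨pa, hpa⟩ := ha
      obtain ⟨pb, hpb⟩ := hb
      rw [PhiPre_inl_mem hinj a hpa.symm, PhiPre_inr_mem hinj b hpb.symm] at h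
      have hta : (pa.2 : ℝ) ≤ 0 := param_le hinj hc0 hc2 (by rw [hpa]; exact a.2)
      have htb : 0 ≤ (pb.2 : ℝ) := param_ge hinj hc0 hc1 (by rw [hpb]; exact b.2)
      obtain ⟨hx, hr⟩ := hcc _ _ _ _
        (Set.mem_Icc.mpr ⟨by linarith [pa.2.2.1], by linarith⟩)
        (Set.mem_Icc.mpr ⟨by linarith, by linarith [pb.2.2.2]⟩) h
      exact absurd hr (by intro hr'; linarith)
    · obtain ⟨pa, hpa⟩ := ha
      rw [PhiPre_inl_mem hinj a hpa.symm, PhiPre_inr_notMem b hb] at h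
      exact absurd ⟨_, h⟩ hb
    · obtain ⟨pb, hpb⟩ := hb
      rw [PhiPre_inl_notMem a ha, PhiPre_inr_mem hinj b hpb.symm] at h
      exact absurd ⟨_, h.symm⟩ ha
    · rw [PhiPre_inl_notMem a ha, PhiPre_inr_notMem b hb] at h
      have hm : (a : M) ∈ M₁ ∩ M₂ := ⟨a.2, h ▸ b.2⟩
      exact absurd ⟨(⟨(a : M), hm⟩, zeroI), hc0 ⟨(a : M), hm⟩⟩ ha
  · -- cylinder vs M₁
    by_cases hb : (b : M) ∈ Set.range c
    · obtain ⟨pb, hpb⟩ := hb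
      rw [PhiPre_cyl, PhiPre_inl_mem hinj b hpb.symm] at h
      have htb : (pb.2 : ℝ) ≤ 0 := param_le hinj hc0 hc2 (by rw [hpb]; exact b.2)
      obtain ⟨hx, hr⟩ := hcc _ _ _ _
        (Set.mem_Icc.mpr ⟨by linarith [pc.2.2.1], by linarith [pc.2.2.2]⟩)
        (Set.mem_Icc.mpr ⟨by linarith [pb.2.2.1], by linarith⟩) h
      have htb0 : (pb.2 : ℝ) = 0 := by
        have := pc.2.2.1
        linarith
      have htp : (pc.2 : ℝ) = -1 := by linarith
      symm
      apply Quot.sound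
      left
      refine ⟨pb.1, ?_, ?_⟩
      · have hxx : b = ⟨(pb.1 : M), pb.1.2.1⟩ := by
          apply Subtype.ext
          show (b : M) = (pb.1 : M)
          rw [← hpb]
          conv_lhs => rw [show pb = (pb.1, zeroI) from Prod.ext rfl (Subtype.ext htb0)]
          exact hc0 pb.1
        rw [hxx]
      · have hq2 : pc.2 = negOne := Subtype.ext htp
        rw [show pc = (pb.1, negOne) from Prod.ext hx hq2]
    · rw [PhiPre_cyl, PhiPre_inl_notMem b hb] at h
      exact absurd ⟨_, h⟩ hb
  · -- cylinder vs cylinder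
    rw [PhiPre_cyl, PhiPre_cyl] at h
    obtain ⟨hx, hr⟩ := hcc _ _ _ _
      (Set.mem_Icc.mpr ⟨by linarith [pc.2.2.1], by linarith [pc.2.2.2]⟩)
      (Set.mem_Icc.mpr ⟨by linarith [qc.2.2.1], by linarith [qc.2.2.2]⟩) h
    have : pc = qc := Prod.ext hx (Subtype.ext (by linarith))
    rw [this]
  · -- cylinder vs M₂
    by_cases hb : (b : M) ∈ Set.range c
    · obtain ⟨pb, hpb⟩ := hb
      rw [PhiPre_cyl, PhiPre_inr_mem hinj b hpb.symm] at h
      have htb : 0 ≤ (pb.2 : ℝ) := param_ge hinj hc0 hc1 (by rw [hpb]; exact b.2)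
      obtain ⟨hx, hr⟩ := hcc _ _ _ _
        (Set.mem_Icc.mpr ⟨by linarith [pc.2.2.1], by linarith [pc.2.2.2]⟩)
        (Set.mem_Icc.mpr ⟨by linarith, by linarith [pb.2.2.2]⟩) h
      have htb0 : (pb.2 : ℝ) = 0 := by
        have := pc.2.2.2
        linarith
      have htp : (pc.2 : ℝ) = 1 := by linarith
      symm
      apply Quot.sound
      right
      refine ⟨pb.1, ?_, ?_⟩
      · have hxx : b = ⟨(pb.1 : M), pb.1.2.2⟩ := by
          apply Subtype.ext
          show (b : M) = (pb.1 : M)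
          rw [← hpb]
          conv_lhs => rw [show pb = (pb.1, zeroI) from Prod.ext rfl (Subtype.ext htb0)]
          exact hc0 pb.1
        rw [hxx]
      · have hq2 : pc.2 = posOne := Subtype.ext htp
        rw [show pc = (pb.1, posOne) from Prod.ext hx hq2]
    · rw [PhiPre_cyl, PhiPre_inr_notMem b hb] at h
      exact absurd ⟨_, h⟩ hb
  · -- M₂ vs M₁
    by_cases ha : (a : M) ∈ Set.range c <;> by_cases hb : (b : M) ∈ Set.range c
    · obtain ⟨pa, hpa⟩ := ha
      obtain ⟨pb, hpb⟩ := hb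
      rw [PhiPre_inr_mem hinj a hpa.symm, PhiPre_inl_mem hinj b hpb.symm] at h
      have hta : 0 ≤ (pa.2 : ℝ) := param_ge hinj hc0 hc1 (by rw [hpa]; exact a.2)
      have htb : (pb.2 : ℝ) ≤ 0 := param_le hinj hc0 hc2 (by rw [hpb]; exact b.2)
      obtain ⟨hx, hr⟩ := hcc _ _ _ _
        (Set.mem_Icc.mpr ⟨by linarith, by linarith [pa.2.2.2]⟩)
        (Set.mem_Icc.mpr ⟨by linarith [pb.2.2.1], by linarith⟩) h
      exact absurd hr (by intro hr'; linarith)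
    · obtain ⟨pa, hpa⟩ := ha
      rw [PhiPre_inr_mem hinj a hpa.symm, PhiPre_inl_notMem b hb] at h
      exact absurd ⟨_, h⟩ hb
    · obtain ⟨pb, hpb⟩ := hb
      rw [PhiPre_inr_notMem a ha, PhiPre_inl_mem hinj b hpb.symm] at h
      exact absurd ⟨_, h.symm⟩ ha
    · rw [PhiPre_inr_notMem a ha, PhiPre_inl_notMem b hb] at h
      have hm : (a : M) ∈ M₁ ∩ M₂ := ⟨h ▸ b.2, a.2⟩
      exact absurd ⟨(⟨(a : M), hm⟩, zeroI), hc0 ⟨(a : M), hm⟩⟩ ha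
  · -- M₂ vs cylinder
    by_cases ha : (a : M) ∈ Set.range c
    · obtain ⟨pa, hpa⟩ := ha
      rw [PhiPre_inr_mem hinj a hpa.symm, PhiPre_cyl] at h
      have hta : 0 ≤ (pa.2 : ℝ) := param_ge hinj hc0 hc1 (by rw [hpa]; exact a.2)
      obtain ⟨hx, hr⟩ := hcc _ _ _ _
        (Set.mem_Icc.mpr ⟨by linarith, by linarith [pa.2.2.2]⟩)
        (Set.mem_Icc.mpr ⟨by linarith [qc.2.2.1], by linarith [qc.2.2.2]⟩) h
      have hta0 : (pa.2 : ℝ) = 0 := by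
        have := qc.2.2.2
        linarith
      have htq : (qc.2 : ℝ) = 1 := by linarith
      apply Quot.sound
      right
      refine ⟨pa.1, ?_, ?_⟩
      · have hxx : a = ⟨(pa.1 : M), pa.1.2.2⟩ := by
          apply Subtype.ext
          show (a : M) = (pa.1 : M)
          rw [← hpa]
          conv_lhs => rw [show pa = (pa.1, zeroI) from Prod.ext rfl (Subtype.ext hta0)]
          exact hc0 pa.1
        rw [hxx]
      · have hq2 : qc.2 = posOne := Subtype.ext htq
        rw [show qc = (pa.1, posOne) from Prod.ext hx.symm hq2]
    · rw [PhiPre_inr_notMem a ha, PhiPre_cyl] at h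
      exact absurd ⟨_, h.symm⟩ ha
  · -- M₂ vs M₂
    by_cases ha : (a : M) ∈ Set.range c <;> by_cases hb : (b : M) ∈ Set.range c
    · obtain ⟨pa, hpa⟩ := ha
      obtain ⟨pb, hpb⟩ := hb
      rw [PhiPre_inr_mem hinj a hpa.symm, PhiPre_inr_mem hinj b hpb.symm] at h
      obtain ⟨hx, hr⟩ := hcc _ _ _ _
        (Set.mem_Icc.mpr ⟨by linarith [pa.2.2.1], by linarith [pa.2.2.2]⟩)
        (Set.mem_Icc.mpr ⟨by linarith [pb.2.2.1], by linarith [pb.2.2.2]⟩) h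
      have ht : (pa.2 : ℝ) = (pb.2 : ℝ) := by linarith
      have hpq : pa = pb := Prod.ext hx (Subtype.ext ht)
      have : a = b := Subtype.ext (by rw [← hpa, ← hpb, hpq])
      rw [this]
    · obtain ⟨pa, hpa⟩ := ha
      rw [PhiPre_inr_mem hinj a hpa.symm, PhiPre_inr_notMem b hb] at h
      exact absurd ⟨_, h⟩ hb
    · obtain ⟨pb, hpb⟩ := hb
      rw [PhiPre_inr_notMem a ha, PhiPre_inr_mem hinj b hpb.symm] at h
      exact absurd ⟨_, h.symm⟩ ha
    · rw [PhiPre_inr_notMem a ha, PhiPre_inr_notMem b hb] at h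
      have hab : a = b := Subtype.ext h
      rw [hab]

end CollapseAux

/-- if the splitting `M = M₁ ∪_{M₀} M₂` admits a bicollar, then the collapse
map `f : M̄ → M` is a homotopy equivalence. -/
theorem statement3 [CompactSpace M] [T2Space M] (M₁ M₂ : Set M)
    (h₁ : IsClosed M₁) (h₂ : IsClosed M₂) (hU : M₁ ∪ M₂ = Set.univ)
    (c : ↥(M₁ ∩ M₂) × ↥(Set.Icc (-1:ℝ) 1) → M)
    (hc : Topology.IsClosedEmbedding c)
    (hc0 : ∀ x : ↥(M₁ ∩ M₂), c (x, ⟨0, by norm_num, by norm_num⟩) = x)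
    (hc1 : ∀ (x : ↥(M₁ ∩ M₂)) (t : ↥(Set.Icc (-1:ℝ) 1)), (t : ℝ) ≤ 0 → c (x, t) ∈ M₁)
    (hc2 : ∀ (x : ↥(M₁ ∩ M₂)) (t : ↥(Set.Icc (-1:ℝ) 1)), 0 ≤ (t : ℝ) → c (x, t) ∈ M₂)
    (hopen : IsOpen (c '' {p : ↥(M₁ ∩ M₂) × ↥(Set.Icc (-1:ℝ) 1) |
        -1 < (p.2 : ℝ) ∧ (p.2 : ℝ) < 1})) :
    ∃ e : ContinuousMap.HomotopyEquiv (Mbar M₁ M₂) M,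
      ∀ p, e.toFun p = collapse M₁ M₂ p := by
    classical
  have hinj : Function.Injective c := hc.toIsEmbedding.injective
  have hc0' : ∀ x : ↥(M₁ ∩ M₂), c (x, zeroI) = x := hc0
  have hopen' : IsOpen (Ubic M₁ M₂ c) := hopen
  haveI : CompactSpace ↥M₁ := isCompact_iff_compactSpace.mp h₁.isCompact
  haveI : CompactSpace ↥M₂ := isCompact_iff_compactSpace.mp h₂.isCompact
  haveI : CompactSpace ↥(M₁ ∩ M₂) := isCompact_iff_compactSpace.mp (h₁.inter h₂).isCompact
  haveI : CompactSpace ↥(Set.Icc (-1:ℝ) 1) := isCompact_iff_compactSpace.mp isCompact_Icc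
  let Φ : Mbar M₁ M₂ → M :=
    Quot.lift (PhiPre M₁ M₂ c) (fun a b hab => Htot_rel hinj hc0' 1 a b hab)
  have hPhiPrec : Continuous (PhiPre M₁ M₂ c) := by
    unfold PhiPre
    exact (cont_Htot hc hc0' hc1 hc2 hopen').comp (continuous_id.prodMk continuous_const)
  have hΦc : Continuous Φ := continuous_quot_lift _ hPhiPrec
  have hbij : Function.Bijective Φ := by
    constructor
    · intro x y
      induction x using Quot.ind with | _ p =>
      induction y using Quot.ind with | _ q =>
      exact phi_inj hinj hc0' hc1 hc2 p q
    · intro m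
      obtain ⟨p, hp⟩ := phi_surj hinj hc1 hc2 hU m
      exact ⟨Quot.mk _ p, hp⟩
  let E : Mbar M₁ M₂ ≃ M := Equiv.ofBijective Φ hbij
  have hEc : Continuous E := hΦc
  let Φh : Mbar M₁ M₂ ≃ₜ M := hEc.homeoOfEquivCompactToT2
  have hcolc : Continuous (collapse M₁ M₂) := by
    unfold collapse
    apply continuous_quot_lift
    unfold collapsePre
    exact (continuous_subtype_val.sumElim
      (continuous_subtype_val.comp continuous_fst)).sumElim continuous_subtype_val
  let fC : C(Mbar M₁ M₂, M) := ⟨collapse M₁ M₂, hcolc⟩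
  let ΦC : C(Mbar M₁ M₂, M) := ⟨Φ, hΦc⟩
  let ψC : C(M, Mbar M₁ M₂) := ⟨Φh.symm, Φh.symm.continuous⟩
  let HtotC : C(Pre M₁ M₂ × unitInterval, M) :=
    ⟨fun q => Htot M₁ M₂ c (q.1, (q.2 : ℝ)),
      (cont_Htot hc hc0' hc1 hc2 hopen').comp
        (continuous_fst.prodMk (continuous_subtype_val.comp continuous_snd))⟩
  let G : C(Pre M₁ M₂, C(unitInterval, M)) := HtotC.curry
  have hGrel : ∀ a b, glueRel M₁ M₂ a b → G a = G b := by
    intro a b hab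
    ext s
    exact Htot_rel hinj hc0' (s : ℝ) a b hab
  let Glift : C(Mbar M₁ M₂, C(unitInterval, M)) :=
    ⟨Quot.lift (fun p => G p) hGrel, continuous_quot_lift _ G.continuous⟩
  let Hmap : C(unitInterval × Mbar M₁ M₂, M) :=
    (ContinuousMap.uncurry Glift).comp ⟨Prod.swap, continuous_swap⟩
  have hF0 : ∀ x, Hmap (0, x) = fC x := by
    intro x
    induction x using Quot.ind with | _ p =>
    simp only [Hmap, Glift, G, HtotC, fC, ContinuousMap.comp_apply, ContinuousMap.coe_mk,
      ContinuousMap.uncurry_apply, ContinuousMap.curry_apply, Function.uncurry, Prod.swap]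
    have h0 : ((0 : unitInterval) : ℝ) = 0 := rfl
    rw [h0]
    exact Htot_zero hc hc0' p
  have hF1 : ∀ x, Hmap (1, x) = ΦC x := by
    intro x
    induction x using Quot.ind with | _ p =>
    simp only [Hmap, Glift, G, HtotC, ΦC, ContinuousMap.comp_apply, ContinuousMap.coe_mk,
      ContinuousMap.uncurry_apply, ContinuousMap.curry_apply, Function.uncurry, Prod.swap]
    have h1 : ((1 : unitInterval) : ℝ) = 1 := rfl
    rw [h1]
    rfl
  let F : ContinuousMap.Homotopy fC ΦC :=
    { toContinuousMap := Hmap, map_zero_left := hF0, map_one_left := hF1 }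
  have hΦψ : ΦC.comp ψC = ContinuousMap.id M := by
    ext m
    exact Φh.apply_symm_apply m
  have hψΦ : ψC.comp ΦC = ContinuousMap.id (Mbar M₁ M₂) := by
    ext x
    exact Φh.symm_apply_apply x
  have hl : (ψC.comp fC).Homotopic (ContinuousMap.id (Mbar M₁ M₂)) := by
    have h1 : (ψC.comp fC).Homotopic (ψC.comp ΦC) :=
      ContinuousMap.Homotopic.comp (ContinuousMap.Homotopic.refl ψC) ⟨F⟩
    rwa [hψΦ] at h1
  have hr : (fC.comp ψC).Homotopic (ContinuousMap.id M) := by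
    have h1 : (fC.comp ψC).Homotopic (ΦC.comp ψC) :=
      ContinuousMap.Homotopic.comp ⟨F⟩ (ContinuousMap.Homotopic.refl ψC)
    rwa [hΦψ] at h1
  exact ⟨⟨fC, ψC, hl, hr⟩, fun p => rfl⟩
end

section
/- With M, M₁, M₂, M₀, M̄ and the collapse map f : M̄ → M as in the context: let C' be the quotient of the disjoint sum M̄ ⊕ (M₀ × Icc (-1:ℝ) 1) by the smallest equivalence relation which, for each x ∈ M₀, identifies the point (x, -1) of the new cylinder summand with the class of (x, -1) in M̄ and the point (x, 1) with the class of (x, 1) in M̄; and let D be the quotient of the disjoint sum M ⊕ (M₀ × Icc (-1:ℝ) 1) by the smallest equivalence relation which, for each x ∈ M₀, identifies both (x, -1) and (x, 1) of the cylinder summand with the point x of M. Then the map induced by f on the M̄-summand and by the identity on the cylinder summand descends to a homeomorphism from the quotient of C' by the smallest equivalence relation identifying two points of the M̄-summand whenever they have the same image under f, onto D. (This is the identification, used in the proof of the additivity theorem, of the pushforward f_*C' of the object C' = M̄ ∪_{M₀×{-1,1}} M₀×[-1,1] along f with the pushout of M ← M₀ × {-1,1} → M₀ × [-1,1].) -/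
set_option linter.unusedSectionVars false

open Set

variable {M : Type*} [TopologicalSpace M]

variable (M₁ M₂ : Set M)

/-- The disjoint sum `M̄ ⊕ (M₀ × [-1,1])` underlying `C'`. -/
abbrev PreC' : Type _ := Mbar M₁ M₂ ⊕ (↥(M₁ ∩ M₂) × ↥(Set.Icc (-1:ℝ) 1))

/-- The gluing relation defining `C' = M̄ ∪_{M₀ × {-1,1}} (M₀ × [-1,1])`: for `x ∈ M₀`, the
point `(x, -1)` of the new cylinder summand is identified with the class of `(x, -1)` in
`M̄`, and `(x, 1)` with the class of `(x, 1)` in `M̄`. -/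
def relC' : PreC' M₁ M₂ → PreC' M₁ M₂ → Prop := fun a b =>
  (∃ x : ↥(M₁ ∩ M₂), a = Sum.inr (x, negOne) ∧
      b = Sum.inl (Quot.mk _ (Sum.inl (Sum.inr (x, negOne))))) ∨
  (∃ x : ↥(M₁ ∩ M₂), a = Sum.inr (x, posOne) ∧
      b = Sum.inl (Quot.mk _ (Sum.inl (Sum.inr (x, posOne)))))

/-- The object `C' = M̄ ∪_{M₀ × {-1,1}} (M₀ × [-1,1])`. -/
abbrev C' : Type _ := Quot (relC' M₁ M₂)

/-- The relation on `C'` identifying two points of the `M̄`-summand whenever they have the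
same image under the collapse map `f`. -/
def relF : C' M₁ M₂ → C' M₁ M₂ → Prop := fun a b =>
  ∃ p q : Mbar M₁ M₂, collapse M₁ M₂ p = collapse M₁ M₂ q ∧
    a = Quot.mk _ (Sum.inl p) ∧ b = Quot.mk _ (Sum.inl q)

/-- The quotient of `C'` by (the smallest equivalence relation generated by) `relF`; this
is the model for the pushforward `f_* C'`. -/
abbrev C'F : Type _ := Quot (relF M₁ M₂)

/-- The gluing relation defining `D = M ∪_{M₀ × {-1,1}} (M₀ × [-1,1])`: for `x ∈ M₀`, both
`(x, -1)` and `(x, 1)` of the cylinder summand are identified with the point `x` of `M`. -/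
def relD : (M ⊕ (↥(M₁ ∩ M₂) × ↥(Set.Icc (-1:ℝ) 1))) →
    (M ⊕ (↥(M₁ ∩ M₂) × ↥(Set.Icc (-1:ℝ) 1))) → Prop := fun a b =>
  ∃ x : ↥(M₁ ∩ M₂), (a = Sum.inr (x, negOne) ∨ a = Sum.inr (x, posOne)) ∧ b = Sum.inl x.1

/-- The pushout `D` of `M ← M₀ × {-1,1} → M₀ × [-1,1]`. -/
abbrev D : Type _ := Quot (relD M₁ M₂)

section Aux

variable (M₁ M₂ : Set M)

/-- Forward map on the pre-level: collapse on the `M̄`-summand, identity on the cylinder. -/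
def toDPre : PreC' M₁ M₂ → D M₁ M₂ :=
  Sum.elim (fun p => Quot.mk _ (Sum.inl (collapse M₁ M₂ p)))
    (fun z => Quot.mk _ (Sum.inr z))

theorem toDPre_rel : ∀ a b, relC' M₁ M₂ a b → toDPre M₁ M₂ a = toDPre M₁ M₂ b := by
  rintro a b (⟨x, rfl, rfl⟩ | ⟨x, rfl, rfl⟩)
  · exact Quot.sound ⟨x, Or.inl rfl, rfl⟩
  · exact Quot.sound ⟨x, Or.inr rfl, rfl⟩

/-- Forward map on `C'`. -/
def toDC' : C' M₁ M₂ → D M₁ M₂ := Quot.lift (toDPre M₁ M₂) (toDPre_rel M₁ M₂)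

theorem toDC'_rel : ∀ a b, relF M₁ M₂ a b → toDC' M₁ M₂ a = toDC' M₁ M₂ b := by
  rintro a b ⟨p, q, h, rfl, rfl⟩
  show Quot.mk _ (Sum.inl (collapse M₁ M₂ p)) = Quot.mk _ (Sum.inl (collapse M₁ M₂ q))
  rw [h]

/-- The forward map `f_* C' → D`. -/
def toD : C'F M₁ M₂ → D M₁ M₂ := Quot.lift (toDC' M₁ M₂) (toDC'_rel M₁ M₂)

/-- A section of the collapse map on points: send `m : M` to a point of `M̄` above it. -/
noncomputable def secMbar (hU : M₁ ∪ M₂ = Set.univ) (m : M) : Mbar M₁ M₂ := by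
  classical
  exact if h : m ∈ M₁ then Quot.mk _ (Sum.inl (Sum.inl ⟨m, h⟩))
  else Quot.mk _ (Sum.inr ⟨m, by
    have hm : m ∈ M₁ ∪ M₂ := hU.symm ▸ Set.mem_univ m
    exact hm.resolve_left h⟩)

theorem collapse_secMbar (hU : M₁ ∪ M₂ = Set.univ) (m : M) :
    collapse M₁ M₂ (secMbar M₁ M₂ hU m) = m := by
  unfold secMbar
  split <;> rfl

/-- Two `M̄`-points of `f_* C'` with the same collapse image are equal. -/
theorem classF_eq (p q : Mbar M₁ M₂) (h : collapse M₁ M₂ p = collapse M₁ M₂ q) :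
    (Quot.mk (relF M₁ M₂) (Quot.mk _ (Sum.inl p))) =
      Quot.mk (relF M₁ M₂) (Quot.mk _ (Sum.inl q)) :=
  Quot.sound ⟨p, q, h, rfl, rfl⟩

/-- Inverse map on the pre-level. -/
noncomputable def fromDPre (hU : M₁ ∪ M₂ = Set.univ) :
    (M ⊕ (↥(M₁ ∩ M₂) × ↥(Set.Icc (-1:ℝ) 1))) → C'F M₁ M₂ :=
  Sum.elim (fun m => Quot.mk _ (Quot.mk _ (Sum.inl (secMbar M₁ M₂ hU m))))
    (fun z => Quot.mk _ (Quot.mk _ (Sum.inr z)))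

theorem fromDPre_inl (hU : M₁ ∪ M₂ = Set.univ) (p : Mbar M₁ M₂) :
    fromDPre M₁ M₂ hU (Sum.inl (collapse M₁ M₂ p)) =
      Quot.mk _ (Quot.mk _ (Sum.inl p)) :=
  classF_eq M₁ M₂ _ _ (by rw [collapse_secMbar])

theorem fromDPre_rel (hU : M₁ ∪ M₂ = Set.univ) :
    ∀ a b, relD M₁ M₂ a b → fromDPre M₁ M₂ hU a = fromDPre M₁ M₂ hU b := by
  rintro a b ⟨x, (rfl | rfl), rfl⟩
  · have h1 : Quot.mk (relC' M₁ M₂) (Sum.inr (x, negOne)) =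
        Quot.mk (relC' M₁ M₂)
          (Sum.inl (Quot.mk (glueRel M₁ M₂) (Sum.inl (Sum.inr (x, negOne))))) :=
      Quot.sound (Or.inl ⟨x, rfl, rfl⟩)
    show Quot.mk _ (Quot.mk _ (Sum.inr (x, negOne))) = _
    rw [h1]
    exact classF_eq M₁ M₂ _ _ (by rw [collapse_secMbar]; rfl)
  · have h1 : Quot.mk (relC' M₁ M₂) (Sum.inr (x, posOne)) =
        Quot.mk (relC' M₁ M₂)
          (Sum.inl (Quot.mk (glueRel M₁ M₂) (Sum.inl (Sum.inr (x, posOne))))) :=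
      Quot.sound (Or.inr ⟨x, rfl, rfl⟩)
    show Quot.mk _ (Quot.mk _ (Sum.inr (x, posOne))) = _
    rw [h1]
    exact classF_eq M₁ M₂ _ _ (by rw [collapse_secMbar]; rfl)

/-- The inverse map `D → f_* C'`. -/
noncomputable def fromD (hU : M₁ ∪ M₂ = Set.univ) : D M₁ M₂ → C'F M₁ M₂ :=
  Quot.lift (fromDPre M₁ M₂ hU) (fromDPre_rel M₁ M₂ hU)

theorem toD_fromD (hU : M₁ ∪ M₂ = Set.univ) (d : D M₁ M₂) :
    toD M₁ M₂ (fromD M₁ M₂ hU d) = d := by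
  induction d using Quot.ind with
  | _ a =>
    rcases a with m | z
    · show Quot.mk _ (Sum.inl (collapse M₁ M₂ (secMbar M₁ M₂ hU m))) = _
      rw [collapse_secMbar]
    · rfl

theorem fromD_toD (hU : M₁ ∪ M₂ = Set.univ) (c : C'F M₁ M₂) :
    fromD M₁ M₂ hU (toD M₁ M₂ c) = c := by
  induction c using Quot.ind with
  | _ a =>
    induction a using Quot.ind with
    | _ b =>
      rcases b with p | z
      · exact fromDPre_inl M₁ M₂ hU p
      · rfl

end Aux

/-- the map induced by the collapse map `f` on the `M̄`-summand and by the
identity on the cylinder summand descends to a homeomorphism from the quotient of `C'` by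
the smallest equivalence relation identifying points of the `M̄`-summand with the same
image under `f`, onto `D`; i.e. `f_* C'` is the pushout of `M ← M₀ × {-1,1} → M₀ × [-1,1]`. -/
theorem statement7 [CompactSpace M] [T2Space M]
    (h₁ : IsClosed M₁) (h₂ : IsClosed M₂) (hU : M₁ ∪ M₂ = Set.univ) :
    ∃ φ : C'F M₁ M₂ ≃ₜ D M₁ M₂,
      (∀ p : Mbar M₁ M₂,
        φ (Quot.mk _ (Quot.mk _ (Sum.inl p))) = Quot.mk _ (Sum.inl (collapse M₁ M₂ p))) ∧
      (∀ (x : ↥(M₁ ∩ M₂)) (t : ↥(Set.Icc (-1:ℝ) 1)),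
        φ (Quot.mk _ (Quot.mk _ (Sum.inr (x, t)))) = Quot.mk _ (Sum.inr (x, t))) := by
  haveI hc1 : CompactSpace ↥M₁ := isCompact_iff_compactSpace.mp h₁.isCompact
  haveI hc2 : CompactSpace ↥M₂ := isCompact_iff_compactSpace.mp h₂.isCompact
  haveI hc0 : CompactSpace ↥(M₁ ∩ M₂) :=
    isCompact_iff_compactSpace.mp (h₁.inter h₂).isCompact
  have hcolPre : Continuous (collapsePre M₁ M₂) := by
    unfold collapsePre; continuity
  have hcol : Continuous (collapse M₁ M₂) := continuous_quot_lift _ hcolPre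
  have htoDPre : Continuous (toDPre M₁ M₂) := by
    unfold toDPre
    exact Continuous.sumElim (continuous_quot_mk.comp (continuous_inl.comp hcol))
      (continuous_quot_mk.comp continuous_inr)
  have htoD : Continuous (toD M₁ M₂) :=
    continuous_quot_lift _ (continuous_quot_lift _ htoDPre)
  -- the projection `M̄ ⊕ cyl → M ⊕ cyl`
  set π : (Mbar M₁ M₂ ⊕ (↥(M₁ ∩ M₂) × ↥(Set.Icc (-1:ℝ) 1))) →
      (M ⊕ (↥(M₁ ∩ M₂) × ↥(Set.Icc (-1:ℝ) 1))) :=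
    Sum.map (collapse M₁ M₂) id with hπdef
  have hπcont : Continuous π := hcol.sumMap continuous_id
  have hπsurj : Function.Surjective π := by
    rintro (m | z)
    · exact ⟨Sum.inl (secMbar M₁ M₂ hU m), by
        simp [hπdef, collapse_secMbar]⟩
    · exact ⟨Sum.inr z, rfl⟩
  have hπq : Topology.IsQuotientMap π := hπcont.isClosedMap.isQuotientMap hπcont hπsurj
  have hqπ : Topology.IsQuotientMap (Quot.mk (relD M₁ M₂) ∘ π) :=
    isQuotientMap_quot_mk.comp hπq
  have hcomp : (fromD M₁ M₂ hU) ∘ (Quot.mk (relD M₁ M₂) ∘ π) =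
      Sum.elim (fun p => Quot.mk _ (Quot.mk _ (Sum.inl p)))
        (fun z => Quot.mk _ (Quot.mk _ (Sum.inr z))) := by
    funext a
    rcases a with p | z
    · exact fromDPre_inl M₁ M₂ hU p
    · rfl
  have hΦ : Continuous (Sum.elim
      (fun p : Mbar M₁ M₂ => Quot.mk (relF M₁ M₂) (Quot.mk (relC' M₁ M₂) (Sum.inl p)))
      (fun z : ↥(M₁ ∩ M₂) × ↥(Set.Icc (-1:ℝ) 1) =>
        Quot.mk (relF M₁ M₂) (Quot.mk (relC' M₁ M₂) (Sum.inr z)))) :=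
    Continuous.sumElim
      (continuous_quot_mk.comp (continuous_quot_mk.comp continuous_inl))
      (continuous_quot_mk.comp (continuous_quot_mk.comp continuous_inr))
  have hfromD : Continuous (fromD M₁ M₂ hU) := by
    rw [hqπ.continuous_iff, hcomp]
    exact hΦ
  refine ⟨⟨⟨toD M₁ M₂, fromD M₁ M₂ hU, fromD_toD M₁ M₂ hU, toD_fromD M₁ M₂ hU⟩,
    htoD, hfromD⟩, fun p => rfl, fun x t => rfl⟩
end
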